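/- Let p ≥ 1 and α_1,…,α_p ∈ [0,1] with α_p > 0, and suppose the greatest common divisor of {i ∈ {1,…,p} : α_i > 0} equals 1. Let r = ρ(A), let u ∈ ℝ^p be given by u_i = r^{−i+1}/Σ_{k=1}^p r^{−k+1} and v ∈ ℝ^p by v_i = (Σ_{k=1}^p r^{−k+1})/(Σ_{k=1}^p k α_k r^{−k}) · Σ_{ℓ=i}^p α_ℓ r^{i−1−ℓ}. Then r^{−n} A^n converges, as n → ∞, to the rank-one matrix Π := u vᵀ. -/

import Mathlib

/-!
Let `r > 0` solve `φ(r) = ∑ₖ αₖ r^{-k} = 1` (1-based `k`). Then `u` is a positive right and `v` a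
nonnegative left eigenvector of `A` for `r`, normalised by `v ⬝ u = 1`; a positive eigenvector
bounds the modulus of every eigenvalue by its own, so `ρ(A) = r`. The gcd condition makes `A`
primitive: the return times to the first index form an additive submonoid of `ℕ` of gcd `1`,
hence contain all large integers. Conjugating by `diag u` and dividing by `r` turns `A` into a
primitive stochastic matrix `P` with stationary distribution `v * u`, and Doeblin's contraction
of the spread of the columns of `P ^ n` gives `P ^ n → 1 (v * u)ᵀ`, i.e. `r⁻ⁿ Aⁿ → u vᵀ`.
-/

open Matrix Filter

noncomputable section

/-- The companion matrix with first row `(α_1, …, α_p)` and subdiagonal entries `1`. -/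
def companion (p : ℕ) (α : Fin p → ℝ) : Matrix (Fin p) (Fin p) ℝ :=
  Matrix.of fun i j => if (i : ℕ) = 0 then α j else if (i : ℕ) = (j : ℕ) + 1 then 1 else 0

/-- The spectral radius of a real matrix: the maximum (supremum) of the moduli of its
complex eigenvalues. -/
def specRad {p : ℕ} (A : Matrix (Fin p) (Fin p) ℝ) : ℝ :=
  sSup {r : ℝ | ∃ z ∈ spectrum ℂ (A.map (Complex.ofReal : ℝ → ℂ)), ‖z‖ = r}

/-- The right Perron vector (0-based indices). -/
def perronU (p : ℕ) (r : ℝ) : Fin p → ℝ :=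
  fun i => r ^ (-(i : ℤ)) / ∑ k : Fin p, r ^ (-(k : ℤ))

/-- The left Perron vector (0-based indices). -/
def perronV (p : ℕ) (α : Fin p → ℝ) (r : ℝ) : Fin p → ℝ :=
  fun i => (∑ k : Fin p, r ^ (-(k : ℤ))) /
      (∑ k : Fin p, ((k : ℕ) + 1 : ℝ) * α k * r ^ (-((k : ℕ) + 1 : ℤ))) *
      ∑ ℓ ∈ Finset.univ.filter (fun ℓ : Fin p => i ≤ ℓ),
        α ℓ * r ^ ((i : ℤ) - (ℓ : ℤ) - 1)

open Finset Topology

section Spread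
variable {ι : Type*} [Fintype ι]

lemma sum_mul_le_sub_mul {w x : ι → ℝ} {M : ℝ} (hw : ∀ k, 0 ≤ w k) (hw1 : ∑ k, w k = 1)
    (hx : ∀ k, x k ≤ M) (k₀ : ι) : ∑ k, w k * x k ≤ M - w k₀ * (M - x k₀) := by
  have hsplit : ∑ k, w k * x k = M - ∑ k, w k * (M - x k) := by
    simp only [mul_sub, sum_sub_distrib, ← sum_mul, hw1, one_mul, sub_sub_cancel]
  rw [hsplit]
  gcongr
  exact single_le_sum (f := fun k => w k * (M - x k))
    (fun k _ => mul_nonneg (hw k) (sub_nonneg.2 (hx k))) (mem_univ k₀)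

lemma le_sum_mul {w x : ι → ℝ} {m : ℝ} (hw : ∀ k, 0 ≤ w k) (hw1 : ∑ k, w k = 1)
    (hx : ∀ k, m ≤ x k) : m ≤ ∑ k, w k * x k :=
  calc m = ∑ k, w k * m := by rw [← sum_mul, hw1, one_mul]
    _ ≤ ∑ k, w k * x k := sum_le_sum fun k _ => mul_le_mul_of_nonneg_left (hx k) (hw k)

def spread (x : ι → ℝ) : ℝ := (⨆ i, x i) - ⨅ i, x i

lemma abs_sub_sum_mul_le_spread {w y : ι → ℝ} (hw : ∀ k, 0 ≤ w k) (hw1 : ∑ k, w k = 1)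
    (i : ι) : |y i - ∑ k, w k * y k| ≤ spread y := by
  have hsup (k : ι) : y k ≤ ⨆ i, y i := le_ciSup (Finite.bddAbove_range y) k
  have hinf (k : ι) : ⨅ i, y i ≤ y k := ciInf_le (Finite.bddBelow_range y) k
  have hmean_le : ∑ k, w k * y k ≤ ⨆ i, y i := (sum_mul_le_sub_mul hw hw1 hsup i).trans
    (sub_le_self _ (mul_nonneg (hw i) (sub_nonneg.2 (hsup i))))
  have hle_mean : ⨅ i, y i ≤ ∑ k, w k * y k := le_sum_mul hw hw1 hinf
  rw [abs_sub_le_iff, spread]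
  constructor <;> linarith [hsup i, hinf i]

variable [Nonempty ι] [DecidableEq ι] {Q : Matrix ι ι ℝ} {δ : ℝ}

/-- Doeblin: every row of `Q` puts weight at least `δ` on a minimal coordinate of `x`. -/
lemma spread_mulVec_le (hQ : Q ∈ rowStochastic ℝ ι) (hδ : ∀ i k, δ ≤ Q i k) (x : ι → ℝ) :
    spread (Q *ᵥ x) ≤ (1 - δ) * spread x := by
  obtain ⟨k₀, hk₀⟩ := exists_eq_ciInf_of_finite (f := x)
  have hrow (i : ι) := sum_row_of_mem_rowStochastic hQ i
  have hspread : 0 ≤ spread x := sub_nonneg.2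
    ((ciInf_le (Finite.bddBelow_range x) k₀).trans (le_ciSup (Finite.bddAbove_range x) k₀))
  have hsup : ⨆ i, (Q *ᵥ x) i ≤ (⨆ i, x i) - δ * spread x := ciSup_le fun i => by
    refine (sum_mul_le_sub_mul (hQ.1 i) (hrow i) (le_ciSup (Finite.bddAbove_range x)) k₀).trans ?_
    rw [hk₀]
    exact sub_le_sub_left (mul_le_mul_of_nonneg_right (hδ i k₀) hspread) _
  have hinf : ⨅ i, x i ≤ ⨅ i, (Q *ᵥ x) i :=
    le_ciInf fun i => le_sum_mul (hQ.1 i) (hrow i) (ciInf_le (Finite.bddBelow_range x))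
  simp only [spread] at *
  linarith

lemma spread_pow_mulVec_le (hQ : Q ∈ rowStochastic ℝ ι) (hδ : ∀ i k, δ ≤ Q i k) (x : ι → ℝ)
    (n : ℕ) : spread (Q ^ n *ᵥ x) ≤ (1 - δ) ^ n * spread x := by
  obtain ⟨i⟩ := ‹Nonempty ι›
  have hδ1 : 0 ≤ 1 - δ := sub_nonneg.2 ((hδ i i).trans (le_one_of_mem_rowStochastic hQ))
  induction n with
  | zero => simp
  | succ n ih =>
    calc spread (Q ^ (n + 1) *ᵥ x) = spread (Q *ᵥ (Q ^ n *ᵥ x)) := by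
          rw [pow_succ', mulVec_mulVec]
      _ ≤ (1 - δ) * spread (Q ^ n *ᵥ x) := spread_mulVec_le hQ hδ _
      _ ≤ (1 - δ) * ((1 - δ) ^ n * spread x) := by gcongr
      _ = (1 - δ) ^ (n + 1) * spread x := by ring

lemma spread_pow_mulVec_le_pow_div (hQ : Q ∈ rowStochastic ℝ ι) {N : ℕ}
    (hδ : ∀ i k, δ ≤ (Q ^ N) i k) (x : ι → ℝ) (n : ℕ) :
    spread (Q ^ n *ᵥ x) ≤ (1 - δ) ^ (n / N) * spread x := by
  obtain ⟨i⟩ := ‹Nonempty ι›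
  have hδ1 : 0 ≤ 1 - δ := sub_nonneg.2 ((hδ i i).trans (le_one_of_mem_rowStochastic (pow_mem hQ N)))
  have hsplit : Q ^ n = (Q ^ N) ^ (n / N) * Q ^ (n % N) := by
    rw [← pow_mul, ← pow_add, Nat.div_add_mod]
  rw [hsplit, ← mulVec_mulVec]
  refine (spread_pow_mulVec_le (pow_mem hQ N) hδ _ _).trans ?_
  gcongr
  simpa using spread_pow_mulVec_le hQ hQ.1 x (n % N)

end Spread

section Stochastic
variable {ι : Type*} [Fintype ι] [DecidableEq ι] {P : Matrix ι ι ℝ} {σ : ι → ℝ}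

lemma vecMul_pow_eq_self (hσ : σ ᵥ* P = σ) (n : ℕ) : σ ᵥ* P ^ n = σ := by
  induction n with
  | zero => simp
  | succ n ih => rw [pow_succ, ← vecMul_vecMul, ih, hσ]

theorem tendsto_pow_of_mem_rowStochastic (hP : P ∈ rowStochastic ℝ ι) (hprim : P.IsPrimitive)
    (hσ0 : ∀ i, 0 ≤ σ i) (hσ1 : ∑ i, σ i = 1) (hσ : σ ᵥ* P = σ) :
    Tendsto (P ^ ·) atTop (𝓝 (vecMulVec 1 σ)) := by
  have : Nonempty ι := by
    by_contra h
    rw [not_nonempty_iff] at h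
    simp at hσ1
  obtain ⟨N, hN, hpos⟩ := hprim.exists_pos_pow
  obtain ⟨⟨i₀, k₀⟩, hmin⟩ := Finite.exists_min fun ik : ι × ι => (P ^ N) ik.1 ik.2
  set δ := (P ^ N) i₀ k₀
  have hδ1 : 0 ≤ 1 - δ := sub_nonneg.2 (le_one_of_mem_rowStochastic (pow_mem hP N))
  have hδ1' : 1 - δ < 1 := by linarith [hpos i₀ k₀]
  -- `σ j` is an average of column `j` of `P ^ n`
  have hentry (n : ℕ) (i j : ι) : |(P ^ n) i j - σ j| ≤ spread (P ^ n *ᵥ Pi.single j 1) := by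
    have hσj : σ j = ∑ k, σ k * (P ^ n *ᵥ Pi.single j 1) k := by
      conv_lhs => rw [← vecMul_pow_eq_self hσ n]
      simp [vecMul, dotProduct]
    simpa [hσj] using abs_sub_sum_mul_le_spread hσ0 hσ1 i (y := P ^ n *ᵥ Pi.single j 1)
  have hgeom (j : ι) :
      Tendsto (fun n => (1 - δ) ^ (n / N) * spread (Pi.single j (1 : ℝ))) atTop (𝓝 0) := by
    simpa using ((tendsto_pow_atTop_nhds_zero_of_lt_one hδ1 hδ1').comp
      (Nat.tendsto_div_const_atTop hN.ne')).mul_const _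
  refine tendsto_pi_nhds.2 fun i => tendsto_pi_nhds.2 fun j => ?_
  rw [vecMulVec_apply, Pi.one_apply, one_mul, tendsto_iff_norm_sub_tendsto_zero]
  exact squeeze_zero (fun n => norm_nonneg _) (fun n => (hentry n i j).trans
    (spread_pow_mulVec_le_pow_div hP (fun i k => hmin (i, k)) _ n)) (hgeom j)

end Stochastic

section Perron
variable {ι : Type*} [Fintype ι] [DecidableEq ι]

lemma diagonal_inv_mul_diagonal {K : Type*} [Field K] {w : ι → K} (hw : ∀ i, w i ≠ 0) :
    diagonal w⁻¹ * diagonal w = 1 := by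
  rw [diagonal_mul_diagonal, ← diagonal_one]
  exact congrArg diagonal (funext fun i => inv_mul_cancel₀ (hw i))

lemma diagonal_mul_diagonal_inv {K : Type*} [Field K] {w : ι → K} (hw : ∀ i, w i ≠ 0) :
    diagonal w * diagonal w⁻¹ = 1 := by
  rw [diagonal_mul_diagonal, ← diagonal_one]
  exact congrArg diagonal (funext fun i => mul_inv_cancel₀ (hw i))

lemma diagonal_conj_pow {K : Type*} [Field K] {w : ι → K} (hw : ∀ i, w i ≠ 0)
    (A : Matrix ι ι K) (n : ℕ) :
    (diagonal w⁻¹ * A * diagonal w) ^ n = diagonal w⁻¹ * A ^ n * diagonal w :=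
  Units.conj_pow' ⟨diagonal w, diagonal w⁻¹, diagonal_mul_diagonal_inv hw,
    diagonal_inv_mul_diagonal hw⟩ A n

def doobTransform (A : Matrix ι ι ℝ) (w : ι → ℝ) (r : ℝ) : Matrix ι ι ℝ :=
  r⁻¹ • (diagonal w⁻¹ * A * diagonal w)

variable {A : Matrix ι ι ℝ} {w v : ι → ℝ} {r : ℝ}

lemma doobTransform_apply (i j : ι) :
    doobTransform A w r i j = r⁻¹ * ((w i)⁻¹ * A i j * w j) := by
  simp [doobTransform, diagonal_mul, mul_diagonal]

lemma doobTransform_pow (hw : ∀ i, w i ≠ 0) (n : ℕ) :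
    doobTransform A w r ^ n = (r ^ n)⁻¹ • (diagonal w⁻¹ * A ^ n * diagonal w) := by
  rw [doobTransform, smul_pow, diagonal_conj_pow hw, inv_pow]

lemma inv_pow_smul_pow_eq_diagonal_mul_doobTransform_pow (hw : ∀ i, w i ≠ 0) (n : ℕ) :
    (r ^ n)⁻¹ • A ^ n = diagonal w * doobTransform A w r ^ n * diagonal w⁻¹ := by
  rw [doobTransform_pow hw, mul_smul_comm, smul_mul_assoc, ← mul_assoc, ← mul_assoc,
    diagonal_mul_diagonal_inv hw, one_mul, mul_assoc, diagonal_mul_diagonal_inv hw, mul_one]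

lemma doobTransform_mem_rowStochastic (hA : ∀ i j, 0 ≤ A i j) (hw : ∀ i, 0 < w i) (hr : 0 < r)
    (hAw : A *ᵥ w = r • w) : doobTransform A w r ∈ rowStochastic ℝ ι := by
  refine mem_rowStochastic_iff_sum.2 ⟨fun i j => ?_, fun i => ?_⟩
  · rw [doobTransform_apply]
    have := hA i j
    have := hw i
    have := hw j
    positivity
  · have hrow : ∑ j, A i j * w j = r * w i := congrFun hAw i
    simp only [doobTransform_apply, mul_assoc, ← mul_sum, hrow]
    field_simp [(hw i).ne']

lemma isPrimitive_doobTransform (hA : A.IsPrimitive) (hw : ∀ i, 0 < w i) (hr : 0 < r)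
    (hAw : A *ᵥ w = r • w) : (doobTransform A w r).IsPrimitive := by
  obtain ⟨N, hN, hpos⟩ := hA.exists_pos_pow
  refine ⟨(doobTransform_mem_rowStochastic hA.nonneg hw hr hAw).1, N, hN, fun i j => ?_⟩
  simp only [doobTransform_pow fun i => (hw i).ne', Matrix.smul_apply, diagonal_mul, mul_diagonal,
    Pi.inv_apply, smul_eq_mul]
  have := hw i
  have := hw j
  have := hpos i j
  positivity

lemma mul_vecMul_doobTransform (hw : ∀ i, w i ≠ 0) (hr : r ≠ 0) (hvA : v ᵥ* A = r • v) :
    (v * w) ᵥ* doobTransform A w r = v * w := by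
  ext j
  have hcol : ∑ i, v i * A i j = r * v j := congrFun hvA j
  simp only [vecMul, dotProduct, Pi.mul_apply, doobTransform_apply]
  calc ∑ i, v i * w i * (r⁻¹ * ((w i)⁻¹ * A i j * w j))
      = r⁻¹ * w j * ∑ i, v i * A i j := by
        rw [mul_sum]
        refine sum_congr rfl fun i _ => ?_
        field_simp [hw i]
    _ = v j * w j := by rw [hcol]; field_simp

theorem tendsto_inv_pow_smul_pow_of_isPrimitive (hA : A.IsPrimitive) (hw : ∀ i, 0 < w i)
    (hr : 0 < r) (hAw : A *ᵥ w = r • w) (hv : ∀ i, 0 ≤ v i) (hvA : v ᵥ* A = r • v)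
    (hvw : v ⬝ᵥ w = 1) :
    Tendsto (fun n : ℕ => (r ^ n)⁻¹ • A ^ n) atTop (𝓝 (vecMulVec w v)) := by
  have hw0 (i : ι) : w i ≠ 0 := (hw i).ne'
  have hlim := tendsto_pow_of_mem_rowStochastic
    (doobTransform_mem_rowStochastic hA.nonneg hw hr hAw)
    (isPrimitive_doobTransform hA hw hr hAw) (fun i => mul_nonneg (hv i) (hw i).le) hvw
    (mul_vecMul_doobTransform hw0 hr.ne' hvA)
  simp_rw [inv_pow_smul_pow_eq_diagonal_mul_doobTransform_pow hw0]
  convert (hlim.const_mul (diagonal w)).mul_const (diagonal w⁻¹)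
  ext i j
  simp [diagonal_mul, mul_diagonal, vecMulVec_apply, mul_assoc, hw0]

end Perron

section Spectrum
variable {ι : Type*} [Fintype ι] [DecidableEq ι]

lemma Matrix.mem_spectrum_iff_exists_mulVec_eq_smul {K : Type*} [Field K] (B : Matrix ι ι K)
    (z : K) : z ∈ spectrum K B ↔ ∃ x, x ≠ 0 ∧ B *ᵥ x = z • x := by
  rw [← spectrum_toLin', ← Module.End.hasEigenvalue_iff_mem_spectrum]
  constructor
  · intro h
    obtain ⟨x, hx⟩ := h.exists_hasEigenvector
    exact ⟨x, hx.2, by simpa using hx.apply_eq_smul⟩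
  · rintro ⟨x, hx0, hx⟩
    exact Module.End.hasEigenvalue_of_hasEigenvector
      ⟨by simpa [Module.End.mem_eigenspace_iff] using hx, hx0⟩

variable {A : Matrix ι ι ℝ} {w : ι → ℝ} {r : ℝ}

lemma norm_le_of_mem_spectrum_of_mulVec_eq_smul (hA : ∀ i j, 0 ≤ A i j) (hw : ∀ i, 0 < w i)
    (hAw : A *ᵥ w = r • w) {z : ℂ} (hz : z ∈ spectrum ℂ (A.map (Complex.ofReal : ℝ → ℂ))) :
    ‖z‖ ≤ r := by
  obtain ⟨x, hx0, hx⟩ := (mem_spectrum_iff_exists_mulVec_eq_smul _ z).1 hz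
  have : Nonempty ι := let ⟨k, _⟩ := Function.ne_iff.1 hx0; ⟨k⟩
  -- compare `x` with `w` at an index where `‖x i‖ / w i` is largest
  obtain ⟨i, hi⟩ := Finite.exists_max fun i => ‖x i‖ / w i
  have hbound (k : ι) : ‖x k‖ ≤ w k * (‖x i‖ / w i) := by
    have := hi k
    rwa [div_le_iff₀ (hw k), mul_comm] at this
  have hxi : 0 < ‖x i‖ := by
    by_contra! h
    refine hx0 (funext fun k => norm_le_zero_iff.1 ((hbound k).trans ?_))
    simp [le_antisymm h (norm_nonneg (x i))]
  have hrow : ∑ k, A i k * w k = r * w i := congrFun hAw i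
  refine le_of_mul_le_mul_right ?_ hxi
  calc ‖z‖ * ‖x i‖ = ‖∑ k, (A i k : ℂ) * x k‖ := by
        rw [← norm_mul, ← smul_eq_mul, ← Pi.smul_apply, ← hx]
        simp [mulVec, dotProduct]
    _ ≤ ∑ k, A i k * ‖x k‖ := by
        refine (norm_sum_le _ _).trans (sum_le_sum fun k _ => ?_)
        rw [norm_mul, Complex.norm_real, Real.norm_of_nonneg (hA i k)]
    _ ≤ ∑ k, A i k * (w k * (‖x i‖ / w i)) :=
        sum_le_sum fun k _ => mul_le_mul_of_nonneg_left (hbound k) (hA i k)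
    _ = r * ‖x i‖ := by
        simp only [← mul_assoc, ← sum_mul, hrow]
        field_simp [(hw i).ne']

lemma ofReal_mem_spectrum_of_mulVec_eq_smul [Nonempty ι] (hw : ∀ i, 0 < w i)
    (hAw : A *ᵥ w = r • w) : (r : ℂ) ∈ spectrum ℂ (A.map (Complex.ofReal : ℝ → ℂ)) := by
  refine (mem_spectrum_iff_exists_mulVec_eq_smul _ _).2 ⟨fun i => w i, ?_, ?_⟩
  · obtain ⟨i⟩ := ‹Nonempty ι›
    exact fun h => (hw i).ne' (by simpa using congrFun h i)
  · ext i
    have := congrFun hAw i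
    simp only [mulVec, dotProduct, map_apply, Pi.smul_apply, smul_eq_mul] at this ⊢
    exact_mod_cast this

end Spectrum

lemma specRad_eq_of_mulVec_eq_smul {p : ℕ} [NeZero p] {A : Matrix (Fin p) (Fin p) ℝ}
    {w : Fin p → ℝ} {r : ℝ} (hA : ∀ i j, 0 ≤ A i j) (hw : ∀ i, 0 < w i)
    (hAw : A *ᵥ w = r • w) : specRad A = r := by
  have hr : 0 ≤ r := by
    have h0 : 0 ≤ (A *ᵥ w) 0 := by
      simp only [mulVec, dotProduct]
      exact sum_nonneg fun k _ => mul_nonneg (hA 0 k) (hw k).le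
    rw [hAw, Pi.smul_apply, smul_eq_mul] at h0
    exact nonneg_of_mul_nonneg_left h0 (hw 0)
  refine IsGreatest.csSup_eq ⟨⟨r, ofReal_mem_spectrum_of_mulVec_eq_smul hw hAw, ?_⟩, ?_⟩
  · simp [abs_of_nonneg hr]
  · rintro _ ⟨z, hz, rfl⟩
    exact norm_le_of_mem_spectrum_of_mulVec_eq_smul hA hw hAw hz

namespace Matrix
variable {ι : Type*} [Fintype ι] [DecidableEq ι] {A : Matrix ι ι ℝ}

lemma pow_add_apply_pos (hA : ∀ i j, 0 ≤ A i j) {a b : ℕ} {i k j : ι} (hik : 0 < (A ^ a) i k)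
    (hkj : 0 < (A ^ b) k j) : 0 < (A ^ (a + b)) i j := by
  rw [pow_add, mul_apply]
  exact sum_pos' (fun l _ => mul_nonneg (pow_apply_nonneg hA a i l) (pow_apply_nonneg hA b l j))
    ⟨k, mem_univ k, mul_pos hik hkj⟩

def returnTimes (hA : ∀ i j, 0 ≤ A i j) (i : ι) : AddSubmonoid ℕ where
  carrier := {m | 0 < (A ^ m) i i}
  zero_mem' := by simp
  add_mem' := pow_add_apply_pos hA

end Matrix

section Companion
variable {q : ℕ} {α : Fin (q + 1) → ℝ}

@[simp] lemma companion_zero_apply (j : Fin (q + 1)) : companion (q + 1) α 0 j = α j := by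
  simp [companion]

lemma companion_succ_apply (i : Fin q) (j : Fin (q + 1)) :
    companion (q + 1) α i.succ j = if j = i.castSucc then 1 else 0 := by
  simp only [companion, of_apply, Fin.val_succ, Fin.ext_iff, Fin.val_castSucc]
  rw [if_neg (Nat.succ_ne_zero _)]
  exact if_congr (by omega) rfl rfl

lemma companion_nonneg (hα : ∀ i, 0 ≤ α i) (i j : Fin (q + 1)) :
    0 ≤ companion (q + 1) α i j := by
  simp only [companion, of_apply]
  split_ifs <;> simp [hα]

lemma companion_mulVec_zero (x : Fin (q + 1) → ℝ) :
    (companion (q + 1) α *ᵥ x) 0 = ∑ j, α j * x j := by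
  simp [mulVec, dotProduct]

lemma companion_mulVec_succ (x : Fin (q + 1) → ℝ) (i : Fin q) :
    (companion (q + 1) α *ᵥ x) i.succ = x i.castSucc := by
  simp [mulVec, dotProduct, companion_succ_apply]

lemma vecMul_companion (x : Fin (q + 1) → ℝ) (j : Fin (q + 1)) :
    (x ᵥ* companion (q + 1) α) j =
      x 0 * α j + ∑ i : Fin q, if j = i.castSucc then x i.succ else 0 := by
  simp [vecMul, dotProduct, Fin.sum_univ_succ, companion_succ_apply]

lemma vecMul_companion_castSucc (x : Fin (q + 1) → ℝ) (j : Fin q) :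
    (x ᵥ* companion (q + 1) α) j.castSucc = x 0 * α j.castSucc + x j.succ := by
  simp [vecMul_companion]

lemma vecMul_companion_last (x : Fin (q + 1) → ℝ) :
    (x ᵥ* companion (q + 1) α) (Fin.last q) = x 0 * α (Fin.last q) := by
  simp [vecMul_companion, (Fin.castSucc_ne_last _).symm]

variable (hα : ∀ i, 0 ≤ α i)
include hα

lemma companion_pow_apply_pos_of_val_eq_add (k : ℕ) (i j : Fin (q + 1))
    (hij : (i : ℕ) = j + k) : 0 < (companion (q + 1) α ^ k) i j := by
  induction k generalizing i with
  | zero => simp [Fin.ext hij]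
  | succ k ih =>
    obtain ⟨i, rfl⟩ : ∃ i' : Fin q, i = i'.succ :=
      ⟨⟨j + k, by omega⟩, Fin.ext (by simp; omega)⟩
    have hstep : 0 < (companion (q + 1) α ^ 1) i.succ i.castSucc := by
      simp [companion_succ_apply]
    rw [add_comm k 1]
    exact pow_add_apply_pos (companion_nonneg hα) hstep (ih _ (by simp at hij ⊢; omega))

lemma val_add_one_mem_returnTimes {i : Fin (q + 1)} (hi : 0 < α i) :
    (i : ℕ) + 1 ∈ returnTimes (companion_nonneg hα) 0 := by
  have hfirst : 0 < (companion (q + 1) α ^ 1) 0 i := by simpa using hi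
  rw [add_comm (i : ℕ) 1]
  exact pow_add_apply_pos (companion_nonneg hα) hfirst
    (companion_pow_apply_pos_of_val_eq_add hα _ _ _ (by simp))

lemma exists_forall_ge_companion_pow_apply_zero_pos
    (hgcd : (univ.filter fun i : Fin (q + 1) => 0 < α i).gcd (fun i => (i : ℕ) + 1) = 1) :
    ∃ n₀, ∀ m ≥ n₀, 0 < (companion (q + 1) α ^ m) 0 0 := by
  set s := (fun i : Fin (q + 1) => (i : ℕ) + 1) '' {i | 0 < α i}
  obtain ⟨n₀, hn₀⟩ := Nat.exists_mem_closure_of_ge s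
  have hs : Nat.setGcd s ∣ 1 :=
    hgcd ▸ dvd_gcd fun i hi => Nat.setGcd_dvd_of_mem ⟨i, by simpa using hi, rfl⟩
  have hle : AddSubmonoid.closure s ≤ returnTimes (companion_nonneg hα) 0 :=
    AddSubmonoid.closure_le.2 (by rintro _ ⟨i, hi, rfl⟩; exact val_add_one_mem_returnTimes hα hi)
  exact ⟨n₀, fun m hm => hle (hn₀ m hm (hs.trans (one_dvd m)))⟩

/-- Every `i` reaches every `j` in exactly `n₀ + 2q + 1` steps: walk down from `i` to `0`,
loop at `0` for the remaining time, jump from `0` to the last index and walk down to `j`. -/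
lemma companion_isPrimitive (hlast : 0 < α (Fin.last q))
    (hgcd : (univ.filter fun i : Fin (q + 1) => 0 < α i).gcd (fun i => (i : ℕ) + 1) = 1) :
    (companion (q + 1) α).IsPrimitive := by
  obtain ⟨n₀, hn₀⟩ := exists_forall_ge_companion_pow_apply_zero_pos hα hgcd
  refine ⟨companion_nonneg hα, n₀ + 2 * q + 1, by omega, fun i j => ?_⟩
  have hi := i.is_le
  have hj := j.is_le
  have hdown := companion_pow_apply_pos_of_val_eq_add hα i i 0 (by simp)
  have hloop := hn₀ (n₀ + (q - i) + j) (by omega)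
  have hjump : 0 < (companion (q + 1) α ^ 1) 0 (Fin.last q) := by simpa using hlast
  have hdown' := companion_pow_apply_pos_of_val_eq_add hα (q - j) (Fin.last q) j (by simp; omega)
  have hA := companion_nonneg hα
  have hpath := pow_add_apply_pos hA hdown
    (pow_add_apply_pos hA hloop (pow_add_apply_pos hA hjump hdown'))
  rwa [show (i : ℕ) + (n₀ + (q - i) + j + (1 + (q - j))) = n₀ + 2 * q + 1 by omega] at hpath

end Companion

section PerronTail
variable {p : ℕ} {α : Fin p → ℝ} {r : ℝ}

/-- `companion p α` has characteristic polynomial `x ^ p * (1 - phi α x)`. -/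
def phi (α : Fin p → ℝ) (x : ℝ) : ℝ := ∑ k, α k * x ^ (-((k : ℕ) + 1 : ℤ))

/-- The sum in `perronV`, indexed by `ℕ` so that `perronTail α r p = 0` ends the recursion
`mul_perronTail`. -/
def perronTail (α : Fin p → ℝ) (r : ℝ) (i : ℕ) : ℝ :=
  ∑ ℓ : Fin p, if i ≤ (ℓ : ℕ) then α ℓ * r ^ ((i : ℤ) - ℓ - 1) else 0

lemma perronV_eq (i : Fin p) : perronV p α r i =
    (∑ k : Fin p, r ^ (-(k : ℤ))) /
      (∑ k : Fin p, ((k : ℕ) + 1 : ℝ) * α k * r ^ (-((k : ℕ) + 1 : ℤ))) * perronTail α r i := by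
  simp only [perronV, perronTail, sum_filter, Fin.le_def]

lemma perronTail_zero : perronTail α r 0 = phi α r :=
  sum_congr rfl fun ℓ _ => by simp only [zero_le, if_true, Nat.cast_zero, zero_sub, neg_add']

lemma perronTail_of_le {i : ℕ} (hi : p ≤ i) : perronTail α r i = 0 :=
  sum_eq_zero fun ℓ _ => if_neg (by omega)

lemma perronTail_nonneg (hα : ∀ i, 0 ≤ α i) (hr : 0 < r) (i : ℕ) : 0 ≤ perronTail α r i :=
  sum_nonneg fun ℓ _ => by
    split_ifs
    exacts [mul_nonneg (hα ℓ) (zpow_pos hr _).le, le_rfl]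

lemma mul_perronTail (hr : r ≠ 0) (i : ℕ) :
    r * perronTail α r i =
      (∑ ℓ : Fin p, if (ℓ : ℕ) = i then α ℓ else 0) + perronTail α r (i + 1) := by
  simp only [perronTail, mul_sum, ← sum_add_distrib]
  refine sum_congr rfl fun ℓ _ => ?_
  split_ifs with h1 h2 h3 h3 h2 h3 <;> try omega
  · subst h2
    simp [mul_left_comm r, hr]
  · push_cast
    rw [show (i : ℤ) + 1 - ℓ - 1 = (i : ℤ) - ℓ - 1 + 1 by ring, zpow_add_one₀ hr]
    ring
  · simp

lemma sum_zpow_mul_perronTail (hr : r ≠ 0) :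
    ∑ i : Fin p, r ^ (-(i : ℤ)) * perronTail α r i =
      ∑ k : Fin p, ((k : ℕ) + 1 : ℝ) * α k * r ^ (-((k : ℕ) + 1 : ℤ)) := by
  simp only [perronTail, mul_sum, mul_ite, mul_zero]
  rw [sum_comm]
  refine sum_congr rfl fun ℓ _ => ?_
  have hterm (i : Fin p) :
      r ^ (-(i : ℤ)) * (α ℓ * r ^ ((i : ℤ) - ℓ - 1)) = α ℓ * r ^ (-((ℓ : ℕ) + 1 : ℤ)) := by
    rw [mul_left_comm, ← zpow_add₀ hr]
    ring_nf
  simp only [hterm, ← sum_filter, sum_const, ← Fin.le_def]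
  rw [show univ.filter (fun i : Fin p => i ≤ ℓ) = Iic ℓ by ext; simp, Fin.card_Iic, nsmul_eq_mul]
  push_cast
  ring

lemma perronU_pos [NeZero p] (hr : 0 < r) (i : Fin p) : 0 < perronU p r i :=
  div_pos (zpow_pos hr _) (sum_pos (fun _ _ => zpow_pos hr _) univ_nonempty)

lemma perronV_nonneg (hα : ∀ i, 0 ≤ α i) (hr : 0 < r) (i : Fin p) : 0 ≤ perronV p α r i := by
  rw [perronV_eq]
  refine mul_nonneg (div_nonneg (sum_nonneg fun _ _ => (zpow_pos hr _).le)
    (sum_nonneg fun k _ => ?_)) (perronTail_nonneg hα hr i)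
  have := hα k
  have := zpow_pos hr (-((k : ℕ) + 1 : ℤ))
  positivity

lemma perronV_dotProduct_perronU [NeZero p] (hα : ∀ i, 0 ≤ α i) (hr : 0 < r)
    (hφ : phi α r = 1) : perronV p α r ⬝ᵥ perronU p r = 1 := by
  have hterm (i : Fin p) : 0 ≤ r ^ (-(i : ℤ)) * perronTail α r i :=
    mul_nonneg (zpow_pos hr _).le (perronTail_nonneg hα hr i)
  -- the normalising constant is at least its `i = 0` term, which is `phi α r = 1`
  have hD : 0 < ∑ i : Fin p, r ^ (-(i : ℤ)) * perronTail α r i := by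
    have h0 := single_le_sum (fun i _ => hterm i) (mem_univ (0 : Fin p))
    simp only [Fin.val_zero, Nat.cast_zero, neg_zero, zpow_zero, one_mul, perronTail_zero,
      hφ] at h0
    linarith
  have hW : 0 < ∑ k : Fin p, r ^ (-(k : ℤ)) := sum_pos (fun _ _ => zpow_pos hr _) univ_nonempty
  simp only [dotProduct, perronV_eq, perronU]
  rw [← sum_zpow_mul_perronTail hr.ne']
  simp only [mul_assoc, ← mul_sum, mul_div_assoc', ← sum_div, mul_comm (perronTail α r _)]
  field_simp

end PerronTail

lemma zpow_neg_natCast_eq_mul {r : ℝ} (hr : r ≠ 0) (n : ℕ) :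
    r ^ (-(n : ℤ)) = r * r ^ (-((n : ℕ) + 1 : ℤ)) := by
  rw [neg_add', zpow_sub_one₀ hr]
  field_simp

section CompanionPerronVectors
variable {q : ℕ} {α : Fin (q + 1) → ℝ} {r : ℝ}

lemma exists_phi_eq_one (hα : ∀ i, α i ∈ Set.Icc (0 : ℝ) 1) (hlast : 0 < α (Fin.last q)) :
    ∃ r, 0 < r ∧ phi α r = 1 := by
  set a := min 1 (α (Fin.last q))
  have ha0 : 0 < a := lt_min one_pos hlast
  set b : ℝ := q + 1
  have hb1 : 1 ≤ b := by simp [b]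
  have hab : a ≤ b := (min_le_left _ _).trans hb1
  have hcont : ContinuousOn (phi α) (Set.Icc a b) :=
    continuousOn_finsetSum _ fun k _ => continuousOn_const.mul
      (continuousOn_id.zpow₀ _ fun x hx => Or.inl (ha0.trans_le hx.1).ne')
  have hφa : 1 ≤ phi α a := by
    have hpow : a ^ (q + 1) ≤ α (Fin.last q) :=
      (pow_le_of_le_one ha0.le (min_le_left _ _) q.succ_ne_zero).trans (min_le_right _ _)
    refine le_trans ?_ (single_le_sum (fun k _ => mul_nonneg (hα k).1 (zpow_pos ha0 _).le)
      (mem_univ (Fin.last q)))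
    rw [Fin.val_last, _root_.zpow_neg, ← Nat.cast_succ, zpow_natCast, ← div_eq_mul_inv,
      one_le_div (pow_pos ha0 _)]
    exact hpow
  have hφb : phi α b ≤ 1 := by
    calc phi α b ≤ ∑ _k : Fin (q + 1), b⁻¹ := sum_le_sum fun k _ => by
          rw [_root_.zpow_neg, ← Nat.cast_succ, zpow_natCast, ← one_mul b⁻¹]
          exact mul_le_mul (hα k).2
            (inv_anti₀ (by positivity) (le_self_pow₀ hb1 k.val.succ_ne_zero))
            (by positivity) zero_le_one
      _ = 1 := by
          simp only [sum_const, card_univ, Fintype.card_fin, nsmul_eq_mul, b]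
          push_cast
          exact mul_inv_cancel₀ (by positivity)
  obtain ⟨r, hr, hφr⟩ := intermediate_value_Icc' hab hcont ⟨hφb, hφa⟩
  exact ⟨r, ha0.trans_le hr.1, hφr⟩

lemma companion_mulVec_perronU (hr : r ≠ 0) (hφ : phi α r = 1) :
    companion (q + 1) α *ᵥ perronU (q + 1) r = r • perronU (q + 1) r := by
  ext i
  rw [Pi.smul_apply, smul_eq_mul]
  cases i using Fin.cases with
  | zero =>
    have hsum : ∑ j : Fin (q + 1), α j * r ^ (-(j : ℤ)) = r := by
      simp only [zpow_neg_natCast_eq_mul hr, mul_left_comm _ r, ← mul_sum]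
      rw [← phi, hφ, mul_one]
    simp only [companion_mulVec_zero, perronU, mul_div_assoc', ← sum_div, hsum]
    simp
  | succ i =>
    simp only [companion_mulVec_succ, perronU, Fin.val_succ, Fin.val_castSucc,
      zpow_neg_natCast_eq_mul hr (i : ℕ)]
    push_cast
    ring

lemma perronTail_vecMul_companion (hr : r ≠ 0) (hφ : phi α r = 1) :
    (fun i : Fin (q + 1) => perronTail α r i) ᵥ* companion (q + 1) α =
      r • fun i : Fin (q + 1) => perronTail α r i := by
  have hsingle (j : Fin (q + 1)) :
      (∑ ℓ : Fin (q + 1), if (ℓ : ℕ) = j then α ℓ else 0) = α j := by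
    simp [Fin.val_inj]
  ext j
  rw [Pi.smul_apply, smul_eq_mul, mul_perronTail hr, hsingle]
  cases j using Fin.lastCases with
  | last =>
    rw [vecMul_companion_last, Fin.val_zero, perronTail_zero, hφ,
      perronTail_of_le (i := (Fin.last q : ℕ) + 1) (by simp)]
    simp
  | cast j =>
    rw [vecMul_companion_castSucc, Fin.val_zero, perronTail_zero, hφ, one_mul]
    simp

lemma vecMul_companion_perronV (hr : r ≠ 0) (hφ : phi α r = 1) :
    perronV (q + 1) α r ᵥ* companion (q + 1) α = r • perronV (q + 1) α r := by
  have hV : perronV (q + 1) α r = ((∑ k : Fin (q + 1), r ^ (-(k : ℤ))) /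
      (∑ k : Fin (q + 1), ((k : ℕ) + 1 : ℝ) * α k * r ^ (-((k : ℕ) + 1 : ℤ)))) •
        fun i : Fin (q + 1) => perronTail α r i :=
    funext perronV_eq
  rw [hV, smul_vecMul, perronTail_vecMul_companion hr hφ, smul_comm]

end CompanionPerronVectors

/-- in the primitive case, `ρ(A)^{−n} A^n → Π := u vᵀ` as `n → ∞`. -/
theorem normalized_powers_tendsto_perron_projection
    (p : ℕ) (hp : 0 < p) (α : Fin p → ℝ)
    (hα : ∀ i, α i ∈ Set.Icc (0 : ℝ) 1)
    (hαp : 0 < α ⟨p - 1, by omega⟩)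
    (hgcd : (Finset.univ.filter fun i : Fin p => 0 < α i).gcd
        (fun i => (i : ℕ) + 1) = 1) :
    Tendsto (fun n : ℕ => (specRad (companion p α) ^ n)⁻¹ • (companion p α) ^ n)
      atTop
      (nhds (Matrix.vecMulVec (perronU p (specRad (companion p α)))
        (perronV p α (specRad (companion p α))))) := by
  obtain ⟨q, rfl⟩ := Nat.exists_eq_add_one_of_ne_zero hp.ne'
  have hα0 (i : Fin (q + 1)) : 0 ≤ α i := (hα i).1
  have hlast : 0 < α (Fin.last q) := hαp
  obtain ⟨r, hr, hφ⟩ := exists_phi_eq_one hα hlast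
  have hAu := companion_mulVec_perronU hr.ne' hφ
  rw [specRad_eq_of_mulVec_eq_smul (companion_nonneg hα0) (perronU_pos hr) hAu]
  exact tendsto_inv_pow_smul_pow_of_isPrimitive (companion_isPrimitive hα0 hlast hgcd)
    (perronU_pos hr) hr hAu (perronV_nonneg hα0 hr) (vecMul_companion_perronV hr.ne' hφ)
    (perronV_dotProduct_perronU hα0 hr hφ)

end
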